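/- GMRES convergence bound for eigenvalues in an ellipse (Theorem 1): suppose A = V Λ V⁻¹ with V invertible and Λ = diag(λ₁, …, λ_N), and suppose all eigenvalues λ₁, …, λ_N lie in the ellipse E(c, d, a), which does not contain the origin 0. Then for every j ≥ 1 the j-th GMRES residual satisfies ‖r_j‖₂ ≤ κ₂(V) · (C_j(a/d) / |C_j(c/d)|) · ‖r₀‖₂. -/

import Mathlib

open Matrix

/-- The Euclidean (ℓ²) norm on `ℂ^N`. -/
noncomputable def enorm2 {N : ℕ} (x : Fin N → ℂ) : ℝ :=
  Real.sqrt (∑ i, ‖x i‖ ^ 2)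

/-- The `j`-th Krylov subspace `K_j(A, r₀) = span {r₀, A r₀, …, A^{j-1} r₀}`. -/
noncomputable def krylov {N : ℕ} (A : Matrix (Fin N) (Fin N) ℂ)
    (r₀ : Fin N → ℂ) (j : ℕ) : Submodule ℂ (Fin N → ℂ) :=
  Submodule.span ℂ {v : Fin N → ℂ | ∃ i < j, v = (A ^ i) *ᵥ r₀}

/-- The spectral (ℓ²-operator) norm of a matrix. -/
noncomputable def opNorm2 {N : ℕ} (W : Matrix (Fin N) (Fin N) ℂ) : ℝ :=
  ‖Matrix.toEuclideanCLM (𝕜 := ℂ) W‖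

/-- The ℓ²-condition number `κ₂(W) = ‖W‖₂ ‖W⁻¹‖₂`. -/
noncomputable def cond2 {N : ℕ} (W : Matrix (Fin N) (Fin N) ℂ) : ℝ :=
  opNorm2 W * opNorm2 W⁻¹

/-- The closed ellipse `E(c, d, a)` in the complex plane with center `c`,
focal distance `d`, and semi-major axis `a`. -/
def ellipseE (c d a : ℝ) : Set ℂ :=
  {z : ℂ | ‖z - ((c : ℂ) - (d : ℂ))‖ +
      ‖z - ((c : ℂ) + (d : ℂ))‖ ≤ 2 * a}


section AuxLemmas
open Polynomial Polynomial.Chebyshev Complex Matrix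


-- Chebyshev via Joukowski: T_n((ζ+ζ⁻¹)/2) = (ζ^n + ζ⁻ⁿ)/2
lemma T_eval_zeta (n : ℕ) (ζ : ℂ) (hζ : ζ ≠ 0) :
    (Chebyshev.T ℂ (n : ℤ)).eval ((ζ + ζ⁻¹) / 2) = (ζ ^ n + (ζ⁻¹) ^ n) / 2 := by
  set θ : ℂ := -(Complex.I * Complex.log ζ) with hθ
  have hexp : Complex.exp (θ * Complex.I) = ζ := by
    have : θ * Complex.I = Complex.log ζ := by
      rw [hθ]; ring_nf; rw [Complex.I_sq]; ring
    rw [this, Complex.exp_log hζ]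
  have hexpneg : Complex.exp (-θ * Complex.I) = ζ⁻¹ := by
    rw [neg_mul, Complex.exp_neg, hexp]
  have hcos : Complex.cos θ = (ζ + ζ⁻¹) / 2 := by
    rw [Complex.cos, hexp, hexpneg]
  rw [← hcos, Polynomial.Chebyshev.T_complex_cos]
  have h1 : ((n : ℤ) : ℂ) * θ = (n : ℂ) * θ := by push_cast; ring
  rw [h1, Complex.cos]
  have h2 : (n : ℂ) * θ * Complex.I = (n : ℕ) * (θ * Complex.I) := by push_cast; ring
  have h3 : -((n : ℂ) * θ) * Complex.I = (n : ℕ) * (-θ * Complex.I) := by push_cast; ring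
  rw [h2, h3, Complex.exp_nat_mul, Complex.exp_nat_mul, hexp, hexpneg]

lemma T_eval_rho (n : ℕ) (ρ : ℝ) (hρ : ρ ≠ 0) :
    (Chebyshev.T ℝ (n : ℤ)).eval ((ρ + ρ⁻¹) / 2) = (ρ ^ n + (ρ⁻¹) ^ n) / 2 := by
  have h := T_eval_zeta n (ρ : ℂ) (by exact_mod_cast hρ)
  have h2 : (((Chebyshev.T ℝ (n : ℤ)).eval ((ρ + ρ⁻¹) / 2) : ℝ) : ℂ) =
      (Chebyshev.T ℂ (n : ℤ)).eval (((ρ + ρ⁻¹) / 2 : ℝ) : ℂ) :=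
    Polynomial.Chebyshev.complex_ofReal_eval_T _ _
  have h3 : (((ρ + ρ⁻¹) / 2 : ℝ) : ℂ) = ((ρ : ℂ) + (ρ : ℂ)⁻¹) / 2 := by push_cast; ring
  rw [h3, h] at h2
  have h4 : ((ρ : ℂ) ^ n + ((ρ : ℂ)⁻¹) ^ n) / 2 = (((ρ ^ n + (ρ⁻¹) ^ n) / 2 : ℝ) : ℂ) := by
    push_cast; ring
  rw [h4] at h2
  exact_mod_cast h2

lemma aux_add_inv {x y : ℝ} (hx : 1 ≤ x) (hxy : x ≤ y) : x + x⁻¹ ≤ y + y⁻¹ := by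
  have hx0 : 0 < x := by linarith
  have hy0 : 0 < y := by linarith
  have h1 : x⁻¹ - y⁻¹ = (y - x) / (x * y) := by field_simp
  have h2 : (y - x) / (x * y) ≤ y - x := div_le_self (by linarith) (by nlinarith)
  linarith

lemma aux_add_inv_strict {x y : ℝ} (hx : 1 ≤ x) (hxy : x < y) : x + x⁻¹ < y + y⁻¹ := by
  have hx0 : 0 < x := by linarith
  have hy0 : 0 < y := by linarith
  have h1 : x⁻¹ - y⁻¹ = (y - x) / (x * y) := by field_simp
  have h2 : (y - x) / (x * y) < y - x := div_lt_self (by linarith) (by nlinarith)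
  linarith

lemma pow_add_inv_le (n : ℕ) {s r : ℝ} (hs : 1 ≤ s) (hr : 0 < r) (h : r + r⁻¹ ≤ 2 * s) :
    (r ^ n + (r⁻¹) ^ n) / 2 ≤ (Chebyshev.T ℝ (n : ℤ)).eval s := by
  set ρ : ℝ := s + Real.sqrt (s ^ 2 - 1) with hρdef
  have hsq : Real.sqrt (s ^ 2 - 1) ^ 2 = s ^ 2 - 1 := Real.sq_sqrt (by nlinarith)
  have hsqnn : 0 ≤ Real.sqrt (s ^ 2 - 1) := Real.sqrt_nonneg _
  have hρ1 : 1 ≤ ρ := by rw [hρdef]; linarith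
  have hρ0 : 0 < ρ := by linarith
  have hρinv : ρ⁻¹ = s - Real.sqrt (s ^ 2 - 1) := by
    have hmul : ρ * (s - Real.sqrt (s ^ 2 - 1)) = 1 := by rw [hρdef]; nlinarith
    exact inv_eq_of_mul_eq_one_right hmul
  have hsum : ρ + ρ⁻¹ = 2 * s := by rw [hρinv, hρdef]; ring
  have hs2 : (ρ + ρ⁻¹) / 2 = s := by linarith
  have hTs : (Chebyshev.T ℝ (n : ℤ)).eval s = (ρ ^ n + (ρ⁻¹) ^ n) / 2 := by
    rw [← hs2]; exact T_eval_rho n ρ hρ0.ne'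
  set r' : ℝ := max r r⁻¹ with hr'def
  have hrinv0 : 0 < r⁻¹ := inv_pos.mpr hr
  have hr'1 : 1 ≤ r' := by
    rcases le_total r 1 with hc | hc
    · have h1 : 1 ≤ r⁻¹ := by nlinarith [mul_inv_cancel₀ hr.ne']
      exact le_trans h1 (le_max_right _ _)
    · exact le_trans hc (le_max_left _ _)
  have hr'0 : 0 < r' := by linarith
  have hpair : r' ^ n + (r'⁻¹) ^ n = r ^ n + (r⁻¹) ^ n ∧ r' + r'⁻¹ = r + r⁻¹ := by
    rcases le_total r r⁻¹ with hc | hc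
    · have h1 : r' = r⁻¹ := max_eq_right hc
      have h2 : r'⁻¹ = r := by rw [h1, inv_inv]
      constructor <;> simp [h2, h1, inv_inv] <;> ring
    · have h1 : r' = r := max_eq_left hc
      have h2 : r'⁻¹ = r⁻¹ := by rw [h1]
      constructor <;> simp [h2, h1]
  have hr'ρ : r' ≤ ρ := by
    by_contra hcon
    push_neg at hcon
    have := aux_add_inv_strict hρ1 hcon
    rw [hpair.2] at this
    linarith
  have hx1 : 1 ≤ r' ^ n := one_le_pow₀ hr'1
  have hxy : r' ^ n ≤ ρ ^ n := pow_le_pow_left₀ (by linarith) hr'ρ n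
  have key : r' ^ n + (r' ^ n)⁻¹ ≤ ρ ^ n + (ρ ^ n)⁻¹ := aux_add_inv hx1 hxy
  rw [hTs, ← hpair.1, inv_pow, inv_pow]
  linarith

lemma abs_T_le (n : ℕ) {s : ℝ} (hs : 1 ≤ s) {w : ℂ}
    (hw : ‖w - 1‖ + ‖w + 1‖ ≤ 2 * s) :
    ‖(Chebyshev.T ℂ (n : ℤ)).eval w‖ ≤ (Chebyshev.T ℝ (n : ℤ)).eval s := by
  obtain ⟨θ, hθ⟩ := Complex.cos_surjective w
  set ζ : ℂ := Complex.exp (θ * Complex.I) with hζdef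
  have hζ0 : ζ ≠ 0 := Complex.exp_ne_zero _
  have hw' : w = (ζ + ζ⁻¹) / 2 := by
    rw [← hθ, Complex.cos, neg_mul, Complex.exp_neg]
  set r : ℝ := ‖ζ‖ with hrdef
  have hr0 : 0 < r := norm_pos_iff.mpr hζ0
  have key : r + r⁻¹ ≤ 2 * s := by
    have h1 : w - 1 = (ζ - 1) ^ 2 / (2 * ζ) := by rw [hw']; field_simp; ring
    have h2 : w + 1 = (ζ + 1) ^ 2 / (2 * ζ) := by rw [hw']; field_simp; ring
    have e1 : ‖w - 1‖ = (‖ζ - 1‖) ^ 2 / (2 * r) := by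
      rw [h1, norm_div, norm_pow, norm_mul, Complex.norm_two]
    have e2 : ‖w + 1‖ = (‖ζ + 1‖) ^ 2 / (2 * r) := by
      rw [h2, norm_div, norm_pow, norm_mul, Complex.norm_two]
    have e3 : (‖ζ - 1‖) ^ 2 + (‖ζ + 1‖) ^ 2 = 2 * r ^ 2 + 2 := by
      rw [Complex.sq_norm, Complex.sq_norm]
      rw [Complex.normSq_sub, Complex.normSq_add]
      have : Complex.normSq ζ = r ^ 2 := (Complex.sq_norm ζ).symm
      simp [this]
      ring
    have e4 : r + r⁻¹ = (2 * r ^ 2 + 2) / (2 * r) := by field_simp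
    rw [e1, e2, ← add_div, e3] at hw
    rw [e4]; exact hw
  have hT : (Chebyshev.T ℂ (n : ℤ)).eval w = (ζ ^ n + (ζ⁻¹) ^ n) / 2 := by
    rw [hw']; exact T_eval_zeta n ζ hζ0
  have habs : ‖(Chebyshev.T ℂ (n : ℤ)).eval w‖ ≤ (r ^ n + (r⁻¹) ^ n) / 2 := by
    rw [hT, norm_div, Complex.norm_two]
    have := norm_add_le (ζ ^ n) ((ζ⁻¹) ^ n)
    rw [norm_pow, norm_pow, norm_inv] at this
    calc ‖ζ ^ n + ζ⁻¹ ^ n‖ / 2 ≤ (‖ζ‖ ^ n + (‖ζ‖)⁻¹ ^ n) / 2 := by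
          linarith
      _ = (r ^ n + r⁻¹ ^ n) / 2 := by rw [hrdef]
  exact le_trans habs (pow_add_inv_le n hs hr0 key)

lemma two_le_abs_add_inv {x : ℝ} (hx : x ≠ 0) : 2 ≤ |x + x⁻¹| := by
  rcases hx.lt_or_gt with h | h
  · have h1 : 0 < -x := by linarith
    have h2 : x + x⁻¹ ≤ -2 := by nlinarith [mul_inv_cancel₀ hx, sq_nonneg (x + 1)]
    rw [abs_of_nonpos (by linarith)]; linarith
  · have h2 : 2 ≤ x + x⁻¹ := by nlinarith [mul_inv_cancel₀ hx, sq_nonneg (x - 1)]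
    rw [_root_.abs_of_nonneg (by linarith)]; linarith

lemma one_le_T_eval (n : ℕ) {s : ℝ} (hs : 1 ≤ s) : 1 ≤ (Chebyshev.T ℝ (n : ℤ)).eval s := by
  set ρ : ℝ := s + Real.sqrt (s ^ 2 - 1) with hρdef
  have hsq : Real.sqrt (s ^ 2 - 1) ^ 2 = s ^ 2 - 1 := Real.sq_sqrt (by nlinarith)
  have hsqnn : 0 ≤ Real.sqrt (s ^ 2 - 1) := Real.sqrt_nonneg _
  have hρ1 : 1 ≤ ρ := by rw [hρdef]; linarith
  have hρ0 : 0 < ρ := by linarith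
  have hρinv : ρ⁻¹ = s - Real.sqrt (s ^ 2 - 1) :=
    inv_eq_of_mul_eq_one_right (by rw [hρdef]; nlinarith)
  have hs2 : (ρ + ρ⁻¹) / 2 = s := by rw [hρinv, hρdef]; ring
  have hTs : (Chebyshev.T ℝ (n : ℤ)).eval s = (ρ ^ n + (ρ⁻¹) ^ n) / 2 := by
    rw [← hs2]; exact T_eval_rho n ρ hρ0.ne'
  have hx1 : 1 ≤ ρ ^ n := one_le_pow₀ hρ1
  have := aux_add_inv le_rfl hx1
  rw [hTs, inv_pow]
  simp at this
  linarith

lemma one_le_abs_T_eval (n : ℕ) {t : ℝ} (ht : 1 ≤ |t|) :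
    1 ≤ |(Chebyshev.T ℝ (n : ℤ)).eval t| := by
  have ht2 : 1 ≤ t ^ 2 := by nlinarith [_root_.sq_abs t]
  set ρ : ℝ := t + Real.sqrt (t ^ 2 - 1) with hρdef
  have hsq : Real.sqrt (t ^ 2 - 1) ^ 2 = t ^ 2 - 1 := Real.sq_sqrt (by nlinarith)
  have hmul : ρ * (t - Real.sqrt (t ^ 2 - 1)) = 1 := by rw [hρdef]; nlinarith
  have hρ0 : ρ ≠ 0 := by
    intro h; rw [h, zero_mul] at hmul; norm_num at hmul
  have hρinv : ρ⁻¹ = t - Real.sqrt (t ^ 2 - 1) := inv_eq_of_mul_eq_one_right hmul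
  have hs2 : (ρ + ρ⁻¹) / 2 = t := by rw [hρinv, hρdef]; ring
  have hTs : (Chebyshev.T ℝ (n : ℤ)).eval t = (ρ ^ n + (ρ⁻¹) ^ n) / 2 := by
    rw [← hs2]; exact T_eval_rho n ρ hρ0
  have hpn : (ρ : ℝ) ^ n ≠ 0 := pow_ne_zero _ hρ0
  have h2 := two_le_abs_add_inv hpn
  rw [hTs, inv_pow, abs_div]
  rw [_root_.abs_of_nonneg (by norm_num : (0:ℝ) ≤ 2)]
  linarith

lemma enorm2_nonneg {N : ℕ} (x : Fin N → ℂ) : 0 ≤ enorm2 x := Real.sqrt_nonneg _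

lemma enorm2_eq_norm {N : ℕ} (v : Fin N → ℂ) :
    enorm2 v = ‖(WithLp.equiv 2 (Fin N → ℂ)).symm v‖ := by
  rw [EuclideanSpace.norm_eq]
  simp [enorm2, WithLp.equiv_symm_apply]

lemma enorm2_mulVec_le {N : ℕ} (M : Matrix (Fin N) (Fin N) ℂ) (v : Fin N → ℂ) :
    enorm2 (M *ᵥ v) ≤ opNorm2 M * enorm2 v := by
  have h : (Matrix.toEuclideanCLM (𝕜 := ℂ) M) ((WithLp.equiv 2 (Fin N → ℂ)).symm v) =
      (WithLp.equiv 2 (Fin N → ℂ)).symm (M *ᵥ v) := by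
    rfl
  have := (Matrix.toEuclideanCLM (𝕜 := ℂ) M).le_opNorm ((WithLp.equiv 2 (Fin N → ℂ)).symm v)
  rw [h] at this
  rw [enorm2_eq_norm, enorm2_eq_norm]
  exact this

lemma opNorm2_diagonal_le {N : ℕ} (f : Fin N → ℂ) (C : ℝ) (hC : 0 ≤ C)
    (h : ∀ i, ‖f i‖ ≤ C) : opNorm2 (Matrix.diagonal f) ≤ C := by
  apply ContinuousLinearMap.opNorm_le_bound _ hC
  intro x
  set v : Fin N → ℂ := fun i => x i with hv
  have hx : x = (WithLp.equiv 2 (Fin N → ℂ)).symm v := rfl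
  rw [hx, show (Matrix.toEuclideanCLM (𝕜 := ℂ) (Matrix.diagonal f))
      ((WithLp.equiv 2 (Fin N → ℂ)).symm v) =
      (WithLp.equiv 2 (Fin N → ℂ)).symm (Matrix.diagonal f *ᵥ v) from rfl]
  rw [← enorm2_eq_norm, ← enorm2_eq_norm]
  rw [enorm2, enorm2]
  have key : ∑ i, ‖(Matrix.diagonal f *ᵥ v) i‖ ^ 2 ≤ C ^ 2 * ∑ i, ‖v i‖ ^ 2 := by
    rw [Finset.mul_sum]
    apply Finset.sum_le_sum
    intro i _
    rw [Matrix.mulVec_diagonal]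
    have h1 : ‖f i * v i‖ = ‖f i‖ * ‖v i‖ := by
      simp
    rw [h1, mul_pow]
    have := h i
    have h2 : ‖f i‖ ^ 2 ≤ C ^ 2 := by
      nlinarith [norm_nonneg (f i)]
    nlinarith [sq_nonneg ‖v i‖, norm_nonneg (f i)]
  calc Real.sqrt (∑ i, ‖(Matrix.diagonal f *ᵥ v) i‖ ^ 2)
      ≤ Real.sqrt (C ^ 2 * ∑ i, ‖v i‖ ^ 2) := Real.sqrt_le_sqrt key
    _ = C * Real.sqrt (∑ i, ‖v i‖ ^ 2) := by
        rw [Real.sqrt_mul (sq_nonneg C), Real.sqrt_sq hC]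

lemma sum_mulVec {N : ℕ} {ι : Type*} (s : Finset ι) (M : ι → Matrix (Fin N) (Fin N) ℂ)
    (v : Fin N → ℂ) : (∑ i ∈ s, M i) *ᵥ v = ∑ i ∈ s, (M i) *ᵥ v := by
  ext k
  simp only [Matrix.mulVec, dotProduct, Finset.sum_apply, Matrix.sum_apply,
    Finset.sum_mul]
  rw [Finset.sum_comm]

lemma aeval_diagonal {N : ℕ} (l : Fin N → ℂ) (p : ℂ[X]) :
    Polynomial.aeval (Matrix.diagonal l) p = Matrix.diagonal (fun i => p.eval (l i)) := by
  induction p using Polynomial.induction_on with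
  | C a => simp [Matrix.algebraMap_eq_diagonal]
  | add p q hp hq => simp [hp, hq, Matrix.diagonal_add]
  | monomial n a ih =>
      rw [pow_succ, ← mul_assoc, _root_.map_mul, ih, aeval_X, Matrix.diagonal_mul_diagonal]
      simp [pow_succ, mul_assoc]

lemma aeval_conj {N : ℕ} (V D : Matrix (Fin N) (Fin N) ℂ) (hV : IsUnit V) (p : ℂ[X]) :
    Polynomial.aeval (V * D * V⁻¹) p = V * (Polynomial.aeval D p) * V⁻¹ := by
  have hdet : IsUnit V.det := (Matrix.isUnit_iff_isUnit_det V).mp hV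
  have hVi : V⁻¹ * V = 1 := Matrix.nonsing_inv_mul V hdet
  have hVi' : V * V⁻¹ = 1 := Matrix.mul_nonsing_inv V hdet
  induction p using Polynomial.induction_on with
  | C a =>
      simp only [Polynomial.aeval_C, Algebra.algebraMap_eq_smul_one]
      rw [Matrix.mul_smul, mul_one, Matrix.smul_mul, hVi']
  | add p q hp hq => simp [hp, hq, mul_add, add_mul]
  | monomial n a ih =>
      have e1 : ∀ (M : Matrix (Fin N) (Fin N) ℂ),
          (Polynomial.aeval M) (C a * X ^ n * X) = (Polynomial.aeval M) (C a * X ^ n) * M :=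
        fun M => by rw [_root_.map_mul, aeval_X]
      rw [pow_succ, ← mul_assoc, e1, e1, ih]
      calc V * aeval D (C a * X ^ n) * V⁻¹ * (V * D * V⁻¹)
          = V * (aeval D (C a * X ^ n) * (V⁻¹ * V) * D) * V⁻¹ := by
            simp only [Matrix.mul_assoc]
        _ = V * (aeval D (C a * X ^ n) * D) * V⁻¹ := by rw [hVi, Matrix.mul_one]

lemma natDegree_T_le : ∀ (j : ℕ), (Polynomial.Chebyshev.T ℂ (j : ℤ)).natDegree ≤ j
  | 0 => by simp [Polynomial.Chebyshev.T_zero]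
  | 1 => by simp [Polynomial.Chebyshev.T_one, Polynomial.natDegree_X_le]
  | (n + 2) => by
      have h1 := natDegree_T_le (n + 1)
      have h0 := natDegree_T_le n
      have hc : ((n + 2 : ℕ) : ℤ) = (n : ℤ) + 2 := by push_cast; ring
      rw [hc, Polynomial.Chebyshev.T_add_two]
      apply le_trans (Polynomial.natDegree_sub_le _ _)
      have hx : (2 * Polynomial.X * Polynomial.Chebyshev.T ℂ ((n : ℤ) + 1)).natDegree ≤ n + 2 := by
        apply le_trans (Polynomial.natDegree_mul_le)
        have h2 : (2 * Polynomial.X : ℂ[X]).natDegree ≤ 1 := by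
          apply le_trans (Polynomial.natDegree_mul_le)
          simp [Polynomial.natDegree_X_le]
        have h3 : ((n : ℤ) + 1) = ((n + 1 : ℕ) : ℤ) := by push_cast; ring
        rw [h3]
        omega
      simp only [max_le_iff]
      exact ⟨hx, by omega⟩

end AuxLemmas


open Polynomial Polynomial.Chebyshev Complex in

theorem gmres_convergence_bound_ellipse
    (N : ℕ) (hN : 0 < N) (A V : Matrix (Fin N) (Fin N) ℂ) (l : Fin N → ℂ)
    (hV : IsUnit V) (hA : A = V * Matrix.diagonal l * V⁻¹)
    (b x₀ : Fin N → ℂ) (r₀ : Fin N → ℂ) (hr₀ : r₀ = b - A *ᵥ x₀)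
    (c d a : ℝ) (hd : 0 < d) (hda : d ≤ a)
    (heig : ∀ i : Fin N, l i ∈ ellipseE c d a)
    (h0 : (0 : ℂ) ∉ ellipseE c d a)
    (j : ℕ) (hj : 1 ≤ j) :
    sInf {t : ℝ | ∃ ξ : Fin N → ℂ,
        (∃ k ∈ krylov A r₀ j, ξ = x₀ + k) ∧ t = enorm2 (b - A *ᵥ ξ)} ≤
      cond2 V *
        ((Polynomial.Chebyshev.T ℝ j).eval (a / d) /
          |(Polynomial.Chebyshev.T ℝ j).eval (c / d)|) *
        enorm2 r₀ := by
  classical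
  have hd0 : (d : ℂ) ≠ 0 := by exact_mod_cast hd.ne'
  have hsd : 1 ≤ a / d := (one_le_div hd).mpr hda
  -- |c| > a
  have h0' : 2 * a < |c - d| + |c + d| := by
    simp only [ellipseE, Set.mem_setOf_eq, not_le] at h0
    have e1 : (0 : ℂ) - ((c : ℂ) - (d : ℂ)) = ((d - c : ℝ) : ℂ) := by push_cast; ring
    have e2 : (0 : ℂ) - ((c : ℂ) + (d : ℂ)) = ((-(d + c) : ℝ) : ℂ) := by push_cast; ring
    rw [e1, e2, Complex.norm_real, Complex.norm_real, Real.norm_eq_abs, Real.norm_eq_abs] at h0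
    calc 2 * a < |d - c| + |-(d + c)| := h0
      _ = |c - d| + |c + d| := by rw [abs_sub_comm, abs_neg, add_comm d c]
  have hca : a < |c| := by
    by_contra hcon
    push_neg at hcon
    have h1 := abs_le.mp hcon
    rcases le_total d c with h2 | h2
    · rw [_root_.abs_of_nonneg (by linarith : (0:ℝ) ≤ c - d),
        _root_.abs_of_nonneg (by linarith : (0:ℝ) ≤ c + d)] at h0'
      linarith
    · rcases le_total (-d) c with h3 | h3
      · rw [_root_.abs_of_nonpos (by linarith : c - d ≤ 0),
          _root_.abs_of_nonneg (by linarith : (0:ℝ) ≤ c + d)] at h0'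
        linarith
      · rw [_root_.abs_of_nonpos (by linarith : c - d ≤ 0),
          _root_.abs_of_nonpos (by linarith : c + d ≤ 0)] at h0'
        linarith
  set Tnum : ℝ := (Chebyshev.T ℝ (j : ℤ)).eval (a / d) with hTnumdef
  set Tden : ℝ := |(Chebyshev.T ℝ (j : ℤ)).eval (c / d)| with hTdendef
  have hTnum : 1 ≤ Tnum := one_le_T_eval j hsd
  have hTden : 1 ≤ Tden := by
    apply one_le_abs_T_eval j
    rw [abs_div, _root_.abs_of_pos hd]
    rw [le_div_iff₀ hd]
    linarith [abs_nonneg c]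
  set Cmax : ℝ := Tnum / Tden with hCmaxdef
  have hCmax0 : 0 ≤ Cmax := div_nonneg (by linarith) (by linarith)
  -- the polynomial p
  set γ : ℂ := (c : ℂ) / (d : ℂ) with hγdef
  set β : ℂ := (Chebyshev.T ℂ (j : ℤ)).eval γ with hβdef
  have hγr : γ = ((c / d : ℝ) : ℂ) := by rw [hγdef]; push_cast; ring
  have hβr : β = (((Chebyshev.T ℝ (j : ℤ)).eval (c / d) : ℝ) : ℂ) := by
    rw [hβdef, hγr, ← Polynomial.Chebyshev.complex_ofReal_eval_T]
  have hβabs : ‖β‖ = Tden := by rw [hβr, Complex.norm_real, Real.norm_eq_abs]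
  have hβ0 : β ≠ 0 := by
    intro h
    rw [h, norm_zero] at hβabs
    linarith
  set p : ℂ[X] := Polynomial.C β⁻¹ *
    ((Chebyshev.T ℂ (j : ℤ)).comp (Polynomial.C γ - Polynomial.C ((d : ℂ))⁻¹ * Polynomial.X))
    with hpdef
  have hpeval : ∀ z : ℂ, p.eval z =
      β⁻¹ * (Chebyshev.T ℂ (j : ℤ)).eval (γ - (d : ℂ)⁻¹ * z) := by
    intro z
    rw [hpdef]
    simp [Polynomial.eval_comp]
  have hp0 : p.eval 0 = 1 := by
    rw [hpeval]
    simp [← hβdef, inv_mul_cancel₀ hβ0]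
  have hpdeg : p.natDegree ≤ j := by
    rw [hpdef]
    apply le_trans (Polynomial.natDegree_mul_le)
    simp only [Polynomial.natDegree_C, zero_add]
    apply le_trans (Polynomial.natDegree_comp_le)
    have h1 : (Polynomial.C γ - Polynomial.C ((d : ℂ))⁻¹ * Polynomial.X).natDegree ≤ 1 := by
      apply le_trans (Polynomial.natDegree_sub_le _ _)
      have h2 : (Polynomial.C ((d : ℂ))⁻¹ * Polynomial.X).natDegree ≤ 1 := by
        apply le_trans (Polynomial.natDegree_mul_le)
        simp [Polynomial.natDegree_X_le]
      simp only [Polynomial.natDegree_C, max_le_iff]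
      exact ⟨by omega, h2⟩
    calc (Chebyshev.T ℂ (j : ℤ)).natDegree *
          (Polynomial.C γ - Polynomial.C ((d : ℂ))⁻¹ * Polynomial.X).natDegree
        ≤ j * 1 := Nat.mul_le_mul (natDegree_T_le j) h1
      _ = j := by omega
  -- q with 1 - p = X * q
  have hXdvd : Polynomial.X ∣ (1 - p) := by
    rw [Polynomial.X_dvd_iff, Polynomial.coeff_zero_eq_eval_zero]
    simp [hp0]
  obtain ⟨q, hq⟩ := hXdvd
  have hqdeg : q.natDegree < j := by
    by_cases hq0 : q = 0
    · rw [hq0, Polynomial.natDegree_zero]; omega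
    · have h1 : (Polynomial.X * q).natDegree = 1 + q.natDegree := by
        rw [Polynomial.natDegree_mul Polynomial.X_ne_zero hq0, Polynomial.natDegree_X]
      have h2 : (1 - p).natDegree ≤ j := by
        apply le_trans (Polynomial.natDegree_sub_le _ _)
        simp only [Polynomial.natDegree_one, max_le_iff]
        exact ⟨by omega, hpdeg⟩
      rw [← hq] at h1
      omega
  -- Krylov vector
  set k : Fin N → ℂ := (Polynomial.aeval A q) *ᵥ r₀ with hk
  have hkmem : k ∈ krylov A r₀ j := by
    rw [hk, Polynomial.aeval_eq_sum_range, _root_.sum_mulVec]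
    apply Submodule.sum_mem
    intro i hi
    rw [Matrix.smul_mulVec]
    apply Submodule.smul_mem
    apply Submodule.subset_span
    refine ⟨i, ?_, rfl⟩
    have := Finset.mem_range.mp hi
    omega
  -- residual identity
  set D' : Matrix (Fin N) (Fin N) ℂ := Matrix.diagonal (fun i => p.eval (l i)) with hD'def
  have hres : b - A *ᵥ (x₀ + k) = (V * D' * V⁻¹) *ᵥ r₀ := by
    have h1 : Polynomial.aeval A p = V * D' * V⁻¹ := by
      rw [hA, aeval_conj _ _ hV, aeval_diagonal, hD'def]
    have h2 : Polynomial.aeval A p = 1 - A * Polynomial.aeval A q := by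
      have hp' : p = 1 - Polynomial.X * q := by rw [← hq]; ring
      rw [hp', map_sub, _root_.map_one, _root_.map_mul, Polynomial.aeval_X]
    calc b - A *ᵥ (x₀ + k) = r₀ - A *ᵥ k := by
          rw [Matrix.mulVec_add, hr₀]; abel
      _ = (1 - A * Polynomial.aeval A q) *ᵥ r₀ := by
          rw [Matrix.sub_mulVec, Matrix.one_mulVec, hk, Matrix.mulVec_mulVec]
      _ = (V * D' * V⁻¹) *ᵥ r₀ := by rw [← h2, h1]
  -- entrywise bound
  have hentry : ∀ i, ‖p.eval (l i)‖ ≤ Cmax := by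
    intro i
    rw [hpeval]
    set w : ℂ := γ - (d : ℂ)⁻¹ * (l i) with hwdef
    have hw : ‖w - 1‖ + ‖w + 1‖ ≤ 2 * (a / d) := by
      have h1 : w - 1 = -(l i - ((c : ℂ) - (d : ℂ))) / (d : ℂ) := by
        rw [hwdef, hγdef]; field_simp; ring
      have h2 : w + 1 = -(l i - ((c : ℂ) + (d : ℂ))) / (d : ℂ) := by
        rw [hwdef, hγdef]; field_simp; ring
      have hdabs : ‖(d : ℂ)‖ = d := by
        rw [Complex.norm_real, Real.norm_eq_abs, _root_.abs_of_pos hd]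
      rw [h1, h2, norm_div, norm_div, norm_neg, norm_neg, hdabs]
      have := heig i
      simp only [ellipseE, Set.mem_setOf_eq] at this
      rw [← add_div, div_le_iff₀ hd]
      calc ‖l i - ((c : ℂ) - (d : ℂ))‖ + ‖l i - ((c : ℂ) + (d : ℂ))‖
          ≤ 2 * a := this
        _ = 2 * (a / d) * d := by field_simp
    have habsT := abs_T_le j hsd hw
    rw [norm_mul, norm_inv, hβabs]
    calc Tden⁻¹ * ‖(Chebyshev.T ℂ (j : ℤ)).eval w‖
        ≤ Tden⁻¹ * Tnum := by
          apply mul_le_mul_of_nonneg_left habsT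
          positivity
      _ = Cmax := by rw [hCmaxdef]; field_simp
  have hD' : opNorm2 D' ≤ Cmax := opNorm2_diagonal_le _ _ hCmax0 hentry
  -- norm chain
  have hop0 : ∀ (W : Matrix (Fin N) (Fin N) ℂ), 0 ≤ opNorm2 W := fun W => norm_nonneg _
  have hnorm : enorm2 (b - A *ᵥ (x₀ + k)) ≤ cond2 V * Cmax * enorm2 r₀ := by
    rw [hres, ← Matrix.mulVec_mulVec, ← Matrix.mulVec_mulVec]
    calc enorm2 (V *ᵥ (D' *ᵥ (V⁻¹ *ᵥ r₀)))
        ≤ opNorm2 V * enorm2 (D' *ᵥ (V⁻¹ *ᵥ r₀)) := enorm2_mulVec_le _ _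
      _ ≤ opNorm2 V * (opNorm2 D' * enorm2 (V⁻¹ *ᵥ r₀)) :=
          mul_le_mul_of_nonneg_left (enorm2_mulVec_le _ _) (hop0 V)
      _ ≤ opNorm2 V * (opNorm2 D' * (opNorm2 V⁻¹ * enorm2 r₀)) :=
          mul_le_mul_of_nonneg_left
            (mul_le_mul_of_nonneg_left (enorm2_mulVec_le _ _) (hop0 D')) (hop0 V)
      _ ≤ opNorm2 V * (Cmax * (opNorm2 V⁻¹ * enorm2 r₀)) := by
          apply mul_le_mul_of_nonneg_left _ (hop0 V)
          exact mul_le_mul_of_nonneg_right hD'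
            (mul_nonneg (hop0 _) (enorm2_nonneg _))
      _ = cond2 V * Cmax * enorm2 r₀ := by rw [cond2]; ring
  -- conclude via sInf
  have hmem : enorm2 (b - A *ᵥ (x₀ + k)) ∈ {t : ℝ | ∃ ξ : Fin N → ℂ,
      (∃ k' ∈ krylov A r₀ j, ξ = x₀ + k') ∧ t = enorm2 (b - A *ᵥ ξ)} :=
    ⟨x₀ + k, ⟨k, hkmem, rfl⟩, rfl⟩
  have hbdd : BddBelow {t : ℝ | ∃ ξ : Fin N → ℂ,
      (∃ k' ∈ krylov A r₀ j, ξ = x₀ + k') ∧ t = enorm2 (b - A *ᵥ ξ)} := by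
    refine ⟨0, ?_⟩
    rintro t ⟨ξ, -, rfl⟩
    exact enorm2_nonneg _
  exact le_trans (csInf_le hbdd hmem) hnorm
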